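/- arXiv:2301.08672 — 2 statements merged into one kernel-verified Lean document; each statement's English description precedes it below -/
import Mathlib

section
/- Let L be a regular-epi localization functor on XMod. Then L is conditionally flat if and only if for every L-flat short exact sequence 1 → N →(κ) T →(α) Q → 1 in which the kernel N is an L-local crossed module, the pullback sequence along any morphism Q' → Q is L-flat. -/
set_option linter.unusedVariables false

/-- A crossed module of groups `(M, G, d)` with `G` acting on `M`. -/
structure XMod : Type 1 where
  M : Type
  G : Type
  [grpM : Group M]
  [grpG : Group G]
  act : G →* MulAut M
  d : M →* G
  act_d : ∀ (b : G) (t : M), d (act b t) = b * d t * b⁻¹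
  peiffer : ∀ (t s : M), act (d t) s = t * s * t⁻¹

attribute [instance] XMod.grpM XMod.grpG

/-- A morphism of crossed modules. -/
structure XModHom (N T : XMod) where
  f1 : N.M →* T.M
  f2 : N.G →* T.G
  comm_d : ∀ n, T.d (f1 n) = f2 (N.d n)
  equiv : ∀ (b : N.G) (n : N.M), f1 (N.act b n) = T.act (f2 b) (f1 n)

namespace XModHom

theorem ext {N T : XMod} {f g : XModHom N T} (h1 : f.f1 = g.f1) (h2 : f.f2 = g.f2) :
    f = g := by
  cases f; cases g; cases h1; cases h2; rfl

/-- The identity morphism. -/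
def id (T : XMod) : XModHom T T :=
  ⟨MonoidHom.id _, MonoidHom.id _, fun _ => rfl, fun _ _ => rfl⟩

/-- Composition of morphisms of crossed modules. -/
def comp {A B C : XMod} (g : XModHom B C) (f : XModHom A B) : XModHom A C where
  f1 := g.f1.comp f.f1
  f2 := g.f2.comp f.f2
  comm_d := by intro n; simp [MonoidHom.comp_apply, g.comm_d, f.comm_d]
  equiv := by intro b n; simp [MonoidHom.comp_apply, f.equiv, g.equiv]

/-- The trivial morphism of crossed modules. -/
def triv (A B : XMod) : XModHom A B where
  f1 := 1
  f2 := 1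
  comm_d := by intro n; simp
  equiv := by intro b n; simp

/-- A morphism of crossed modules is an isomorphism if it has a two-sided inverse. -/
def IsIso {A B : XMod} (f : XModHom A B) : Prop :=
  ∃ g : XModHom B A, comp g f = id A ∧ comp f g = id B

/-- Regular epimorphisms of crossed modules are exactly the componentwise
surjective morphisms. -/
def RegEpi {A B : XMod} (f : XModHom A B) : Prop :=
  Function.Surjective f.f1 ∧ Function.Surjective f.f2

/-- `κ` is a kernel of `α` (in the categorical sense). -/
def IsKernelOf {N T Q : XMod} (κ : XModHom N T) (α : XModHom T Q) : Prop :=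
  comp α κ = triv N Q ∧
    ∀ (X : XMod) (u : XModHom X T), comp α u = triv X Q →
      ∃! v : XModHom X N, comp κ v = u

end XModHom

/-- `1 → N → T → Q → 1` is a short exact sequence of crossed modules. -/
def ShortExact {N T Q : XMod} (κ : XModHom N T) (α : XModHom T Q) : Prop :=
  XModHom.IsKernelOf κ α ∧ XModHom.RegEpi α
/-- A localization functor (coaugmented idempotent functor) on `XMod`. -/
structure LocalizationFunctor where
  obj : XMod → XMod
  map : ∀ {A B : XMod}, XModHom A B → XModHom (obj A) (obj B)
  map_id : ∀ A : XMod, map (XModHom.id A) = XModHom.id (obj A)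
  map_comp : ∀ {A B C : XMod} (f : XModHom A B) (g : XModHom B C),
    map (XModHom.comp g f) = XModHom.comp (map g) (map f)
  ell : ∀ A : XMod, XModHom A (obj A)
  natural : ∀ {A B : XMod} (f : XModHom A B),
    XModHom.comp (ell B) f = XModHom.comp (map f) (ell A)
  iso_ell_obj : ∀ A : XMod, XModHom.IsIso (ell (obj A))
  iso_map_ell : ∀ A : XMod, XModHom.IsIso (map (ell A))

namespace LocalizationFunctor

/-- A crossed module is `L`-local if its coaugmentation is an isomorphism. -/
def IsLocal (L : LocalizationFunctor) (X : XMod) : Prop :=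
  XModHom.IsIso (L.ell X)

/-- `L` is a regular-epi localization if every coaugmentation morphism is a
regular epimorphism. -/
def RegEpiLoc (L : LocalizationFunctor) : Prop :=
  ∀ X : XMod, XModHom.RegEpi (L.ell X)

/-- A short exact sequence is `L`-flat if applying `L` yields a short exact sequence. -/
def LFlat (L : LocalizationFunctor) {N T Q : XMod} (κ : XModHom N T) (α : XModHom T Q) : Prop :=
  ShortExact (L.map κ) (L.map α)

end LocalizationFunctor
section Pullback

variable {T Q Q' : XMod} (α : XModHom T Q) (g : XModHom Q' Q)

/-- Level-1 part of the pullback `T ×_Q Q'`, computed componentwise. -/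
def pbM : Subgroup (T.M × Q'.M) where
  carrier := {p | α.f1 p.1 = g.f1 p.2}
  one_mem' := by simp
  mul_mem' := by
    intro a b ha hb
    simp only [Set.mem_setOf_eq, Prod.fst_mul, Prod.snd_mul, map_mul] at *
    rw [ha, hb]
  inv_mem' := by
    intro a ha
    simp only [Set.mem_setOf_eq, Prod.fst_inv, Prod.snd_inv, map_inv] at *
    rw [ha]

/-- Level-2 part of the pullback `T ×_Q Q'`, computed componentwise. -/
def pbG : Subgroup (T.G × Q'.G) where
  carrier := {p | α.f2 p.1 = g.f2 p.2}
  one_mem' := by simp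
  mul_mem' := by
    intro a b ha hb
    simp only [Set.mem_setOf_eq, Prod.fst_mul, Prod.snd_mul, map_mul] at *
    rw [ha, hb]
  inv_mem' := by
    intro a ha
    simp only [Set.mem_setOf_eq, Prod.fst_inv, Prod.snd_inv, map_inv] at *
    rw [ha]

theorem mem_pbM_iff (p : T.M × Q'.M) : p ∈ pbM α g ↔ α.f1 p.1 = g.f1 p.2 := Iff.rfl

theorem mem_pbG_iff (p : T.G × Q'.G) : p ∈ pbG α g ↔ α.f2 p.1 = g.f2 p.2 := Iff.rfl

theorem pb_act_mem {b : T.G × Q'.G} (hb : b ∈ pbG α g) {p : T.M × Q'.M}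
    (hp : p ∈ pbM α g) : (T.act b.1 p.1, Q'.act b.2 p.2) ∈ pbM α g := by
  have hb' : α.f2 b.1 = g.f2 b.2 := hb
  have hp' : α.f1 p.1 = g.f1 p.2 := hp
  show α.f1 (T.act b.1 p.1) = g.f1 (Q'.act b.2 p.2)
  rw [α.equiv, g.equiv, hb', hp']

theorem XMod.act_inv_act (X : XMod) (b : X.G) (t : X.M) :
    X.act b⁻¹ (X.act b t) = t := by
  rw [← MulAut.mul_apply, ← map_mul, inv_mul_cancel, map_one, MulAut.one_apply]

theorem XMod.act_act_inv (X : XMod) (b : X.G) (t : X.M) :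
    X.act b (X.act b⁻¹ t) = t := by
  rw [← MulAut.mul_apply, ← map_mul, mul_inv_cancel, map_one, MulAut.one_apply]

/-- The action of an element of the pullback on the level-1 part, as a group
automorphism. -/
def pbActEquiv (b : ↥(pbG α g)) : ↥(pbM α g) ≃* ↥(pbM α g) where
  toFun p := ⟨(T.act b.1.1 p.1.1, Q'.act b.1.2 p.1.2), pb_act_mem α g b.2 p.2⟩
  invFun p := ⟨(T.act b.1.1⁻¹ p.1.1, Q'.act b.1.2⁻¹ p.1.2),
    pb_act_mem α g ((pbG α g).inv_mem b.2) p.2⟩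
  left_inv p := by
    apply Subtype.ext
    exact Prod.ext (T.act_inv_act _ _) (Q'.act_inv_act _ _)
  right_inv p := by
    apply Subtype.ext
    exact Prod.ext (T.act_act_inv _ _) (Q'.act_act_inv _ _)
  map_mul' p q := by
    apply Subtype.ext
    exact Prod.ext (map_mul _ _ _) (map_mul _ _ _)

/-- The pullback `T ×_Q Q'` of `α : T → Q` along `g : Q' → Q`, computed
componentwise. -/
def pbXMod : XMod where
  M := ↥(pbM α g)
  G := ↥(pbG α g)
  act :=
    { toFun := pbActEquiv α g
      map_one' := by
        apply MulEquiv.ext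
        intro p
        apply Subtype.ext
        apply Prod.ext
        · show T.act (1 : ↥(pbG α g)).1.1 p.1.1 = p.1.1
          simp
        · show Q'.act (1 : ↥(pbG α g)).1.2 p.1.2 = p.1.2
          simp
      map_mul' := by
        intro b c
        apply MulEquiv.ext
        intro p
        apply Subtype.ext
        apply Prod.ext
        · show T.act (b * c).1.1 p.1.1 = T.act b.1.1 (T.act c.1.1 p.1.1)
          simp [map_mul]
        · show Q'.act (b * c).1.2 p.1.2 = Q'.act b.1.2 (Q'.act c.1.2 p.1.2)
          simp [map_mul] }
  d :=
    { toFun := fun p => ⟨(T.d p.1.1, Q'.d p.1.2), by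
        have hp : α.f1 p.1.1 = g.f1 p.1.2 := p.2
        show α.f2 (T.d p.1.1) = g.f2 (Q'.d p.1.2)
        rw [← α.comm_d, ← g.comm_d, hp]⟩
      map_one' := by
        apply Subtype.ext
        apply Prod.ext <;> simp
      map_mul' := by
        intro p q
        apply Subtype.ext
        apply Prod.ext <;> simp }
  act_d := by
    intro b p
    apply Subtype.ext
    apply Prod.ext
    · exact T.act_d _ _
    · exact Q'.act_d _ _
  peiffer := by
    intro p q
    apply Subtype.ext
    apply Prod.ext
    · exact T.peiffer _ _
    · exact Q'.peiffer _ _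

/-- First projection of the pullback. -/
def pbFst : XModHom (pbXMod α g) T where
  f1 := (MonoidHom.fst T.M Q'.M).comp (pbM α g).subtype
  f2 := (MonoidHom.fst T.G Q'.G).comp (pbG α g).subtype
  comm_d := fun _ => rfl
  equiv := fun _ _ => rfl

/-- Second projection of the pullback. -/
def pbSnd : XModHom (pbXMod α g) Q' where
  f1 := (MonoidHom.snd T.M Q'.M).comp (pbM α g).subtype
  f2 := (MonoidHom.snd T.G Q'.G).comp (pbG α g).subtype
  comm_d := fun _ => rfl
  equiv := fun _ _ => rfl

end Pullback
section PullbackMaps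

variable {N T Q Q' : XMod}

/-- The induced morphism from the kernel `N` into the pullback `T ×_Q Q'`. -/
def pbIn (κ : XModHom N T) (α : XModHom T Q) (g : XModHom Q' Q)
    (h : XModHom.comp α κ = XModHom.triv N Q) : XModHom N (pbXMod α g) where
  f1 :=
    { toFun := fun n => ⟨(κ.f1 n, 1), by
        show α.f1 (κ.f1 n) = g.f1 1
        have := congrArg XModHom.f1 h
        have h' : α.f1 (κ.f1 n) = 1 := DFunLike.congr_fun this n
        rw [h', map_one]⟩
      map_one' := by
        apply Subtype.ext
        apply Prod.ext <;> first | rfl | exact map_one _ | simp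
      map_mul' := by
        intro a b
        apply Subtype.ext
        show (κ.f1 (a * b), (1 : Q'.M)) = (κ.f1 a, (1 : Q'.M)) * (κ.f1 b, (1 : Q'.M))
        simp [Prod.ext_iff, map_mul] }
  f2 :=
    { toFun := fun n => ⟨(κ.f2 n, 1), by
        show α.f2 (κ.f2 n) = g.f2 1
        have := congrArg XModHom.f2 h
        have h' : α.f2 (κ.f2 n) = 1 := DFunLike.congr_fun this n
        rw [h', map_one]⟩
      map_one' := by
        apply Subtype.ext
        apply Prod.ext <;> first | rfl | exact map_one _ | simp
      map_mul' := by
        intro a b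
        apply Subtype.ext
        show (κ.f2 (a * b), (1 : Q'.G)) = (κ.f2 a, (1 : Q'.G)) * (κ.f2 b, (1 : Q'.G))
        simp [Prod.ext_iff, map_mul] }
  comm_d := by
    intro n
    apply Subtype.ext
    apply Prod.ext
    · exact κ.comm_d n
    · show Q'.d (1 : Q'.M) = 1
      simp
  equiv := by
    intro b n
    apply Subtype.ext
    apply Prod.ext
    · exact κ.equiv b n
    · show (1 : Q'.M) = Q'.act 1 1
      simp

/-- The induced morphism into the pullback `T ×_Q Q'` from an object mapping
trivially to `Q` through the second leg. -/
def pbInR (α : XModHom T Q) (g : XModHom Q' Q) {X : XMod} (u : XModHom X Q')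
    (h : XModHom.comp g u = XModHom.triv X Q) : XModHom X (pbXMod α g) where
  f1 :=
    { toFun := fun n => ⟨(1, u.f1 n), by
        show α.f1 1 = g.f1 (u.f1 n)
        have := congrArg XModHom.f1 h
        have h' : g.f1 (u.f1 n) = 1 := DFunLike.congr_fun this n
        rw [h', map_one]⟩
      map_one' := by
        apply Subtype.ext
        apply Prod.ext <;> first | rfl | exact map_one _ | simp
      map_mul' := by
        intro a b
        apply Subtype.ext
        show ((1 : T.M), u.f1 (a * b)) = ((1 : T.M), u.f1 a) * ((1 : T.M), u.f1 b)
        simp [Prod.ext_iff, map_mul] }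
  f2 :=
    { toFun := fun n => ⟨(1, u.f2 n), by
        show α.f2 1 = g.f2 (u.f2 n)
        have := congrArg XModHom.f2 h
        have h' : g.f2 (u.f2 n) = 1 := DFunLike.congr_fun this n
        rw [h', map_one]⟩
      map_one' := by
        apply Subtype.ext
        apply Prod.ext <;> first | rfl | exact map_one _ | simp
      map_mul' := by
        intro a b
        apply Subtype.ext
        show ((1 : T.G), u.f2 (a * b)) = ((1 : T.G), u.f2 a) * ((1 : T.G), u.f2 b)
        simp [Prod.ext_iff, map_mul] }
  comm_d := by
    intro n
    apply Subtype.ext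
    apply Prod.ext
    · show T.d (1 : T.M) = 1
      simp
    · exact u.comm_d n
  equiv := by
    intro b n
    apply Subtype.ext
    apply Prod.ext
    · show (1 : T.M) = T.act 1 1
      simp
    · exact u.equiv b n

/-- The morphism of pullbacks `T ×_Q Q' → E ×_Q Q'` induced by `f : T → E`
with `p ∘ f = α`. -/
def pbMapL {E : XMod} (α : XModHom T Q) (p : XModHom E Q) (g : XModHom Q' Q)
    (f : XModHom T E) (hpf : XModHom.comp p f = α) :
    XModHom (pbXMod α g) (pbXMod p g) where
  f1 :=
    { toFun := fun w => ⟨(f.f1 w.1.1, w.1.2), by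
        show p.f1 (f.f1 w.1.1) = g.f1 w.1.2
        have h' : p.f1 (f.f1 w.1.1) = α.f1 w.1.1 :=
          DFunLike.congr_fun (congrArg XModHom.f1 hpf) w.1.1
        rw [h']
        exact w.2⟩
      map_one' := by
        apply Subtype.ext
        apply Prod.ext <;> first | rfl | exact map_one _ | simp
      map_mul' := by
        intro a b
        apply Subtype.ext
        apply Prod.ext
        · exact map_mul f.f1 a.1.1 b.1.1
        · rfl }
  f2 :=
    { toFun := fun w => ⟨(f.f2 w.1.1, w.1.2), by
        show p.f2 (f.f2 w.1.1) = g.f2 w.1.2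
        have h' : p.f2 (f.f2 w.1.1) = α.f2 w.1.1 :=
          DFunLike.congr_fun (congrArg XModHom.f2 hpf) w.1.1
        rw [h']
        exact w.2⟩
      map_one' := by
        apply Subtype.ext
        apply Prod.ext <;> first | rfl | exact map_one _ | simp
      map_mul' := by
        intro a b
        apply Subtype.ext
        apply Prod.ext
        · exact map_mul f.f2 a.1.1 b.1.1
        · rfl }
  comm_d := by
    intro w
    apply Subtype.ext
    apply Prod.ext
    · exact f.comm_d _
    · rfl
  equiv := by
    intro b w
    apply Subtype.ext
    apply Prod.ext
    · exact f.equiv _ _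
    · rfl

end PullbackMaps

/-- A commuting square is a pullback square (categorical definition). -/
def IsPullbackSquare {P X Y Z : XMod} (p1 : XModHom P X) (p2 : XModHom P Y)
    (f : XModHom X Z) (h : XModHom Y Z) : Prop :=
  XModHom.comp f p1 = XModHom.comp h p2 ∧
    ∀ (W : XMod) (u : XModHom W X) (v : XModHom W Y),
      XModHom.comp f u = XModHom.comp h v →
        ∃! w : XModHom W P, XModHom.comp p1 w = u ∧ XModHom.comp p2 w = v

namespace LocalizationFunctor

/-- `L` is admissible for the class of regular epimorphisms: applying `L` to the
pullback of a regular epimorphism `α : LT → LQ` along the coaugmentation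
`ℓ^Q : Q → LQ` yields again a pullback square. -/
def Admissible (L : LocalizationFunctor) : Prop :=
  ∀ (T Q : XMod) (α : XModHom (L.obj T) (L.obj Q)), XModHom.RegEpi α →
    IsPullbackSquare (L.map (pbFst α (L.ell Q))) (L.map (pbSnd α (L.ell Q)))
      (L.map α) (L.map (L.ell Q))

/-- `L` is conditionally flat: the pullback of any `L`-flat short exact sequence
along any morphism is again `L`-flat. -/
def ConditionallyFlat (L : LocalizationFunctor) : Prop :=
  ∀ (N T Q : XMod) (κ : XModHom N T) (α : XModHom T Q) (hse : ShortExact κ α),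
    L.LFlat κ α →
      ∀ (Q' : XMod) (g : XModHom Q' Q),
        L.LFlat (pbIn κ α g hse.1.1) (pbSnd α g)

/-- A short exact sequence `1 → N → T → Q → 1` admits a fiberwise localization:
there is a short exact sequence `1 → LN → E → Q → 1` together with an
`L`-equivalence `T → E` compatible with the coaugmentation of `N`. -/
def AdmitsFiberwise (L : LocalizationFunctor) {N T Q : XMod} (κ : XModHom N T)
    (α : XModHom T Q) : Prop :=
  ∃ (E : XMod) (j : XModHom (L.obj N) E) (p : XModHom E Q) (e : XModHom T E),
    ShortExact j p ∧ XModHom.IsIso (L.map e) ∧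
      XModHom.comp e κ = XModHom.comp j (L.ell N) ∧ XModHom.comp p e = α

end LocalizationFunctor
section Kernel

variable {N T : XMod} (f : XModHom N T)

theorem ker_act_mem {b : N.G} (hb : b ∈ f.f2.ker) {n : N.M} (hn : n ∈ f.f1.ker) :
    N.act b n ∈ f.f1.ker := by
  have hb' : f.f2 b = 1 := hb
  have hn' : f.f1 n = 1 := hn
  show f.f1 (N.act b n) = 1
  rw [f.equiv, hb', hn', map_one]

/-- The automorphism of `ker f.f1` induced by an element of `ker f.f2`. -/
def kerActEquiv (b : ↥f.f2.ker) : ↥f.f1.ker ≃* ↥f.f1.ker where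
  toFun n := ⟨N.act b.1 n.1, ker_act_mem f b.2 n.2⟩
  invFun n := ⟨N.act b.1⁻¹ n.1, ker_act_mem f (f.f2.ker.inv_mem b.2) n.2⟩
  left_inv n := Subtype.ext (N.act_inv_act _ _)
  right_inv n := Subtype.ext (N.act_act_inv _ _)
  map_mul' n m := Subtype.ext (map_mul _ _ _)

/-- The kernel of a morphism of crossed modules, computed componentwise. -/
def kerXMod : XMod where
  M := ↥f.f1.ker
  G := ↥f.f2.ker
  act :=
    { toFun := kerActEquiv f
      map_one' := by
        apply MulEquiv.ext
        intro n
        apply Subtype.ext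
        show N.act (1 : ↥f.f2.ker).1 n.1 = n.1
        simp
      map_mul' := by
        intro b c
        apply MulEquiv.ext
        intro n
        apply Subtype.ext
        show N.act (b * c).1 n.1 = N.act b.1 (N.act c.1 n.1)
        simp [map_mul] }
  d :=
    { toFun := fun n => ⟨N.d n.1, by
        have hn : f.f1 n.1 = 1 := n.2
        show f.f2 (N.d n.1) = 1
        rw [← f.comm_d, hn, map_one]⟩
      map_one' := by
        apply Subtype.ext
        simp
      map_mul' := by
        intro a b
        apply Subtype.ext
        show N.d (a * b).1 = N.d a.1 * N.d b.1
        simp }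
  act_d := by
    intro b n
    apply Subtype.ext
    exact N.act_d _ _
  peiffer := by
    intro n m
    apply Subtype.ext
    exact N.peiffer _ _

/-- The inclusion of the kernel. -/
def kerIncl : XModHom (kerXMod f) N where
  f1 := f.f1.ker.subtype
  f2 := f.f2.ker.subtype
  comm_d := fun _ => rfl
  equiv := fun _ _ => rfl

end Kernel

/-- A crossed module is trivial if both underlying groups are trivial. -/
def XMod.IsTrivial (X : XMod) : Prop :=
  (∀ m : X.M, m = 1) ∧ ∀ b : X.G, b = 1

/-- `X` is `A`-null if the only morphism of crossed modules `A → X` is the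
trivial one. -/
def ANull (A X : XMod) : Prop :=
  ∀ φ : XModHom A X, φ = XModHom.triv A X

/-- `X` is `f`-local if precomposition with `f` is a bijection on morphisms
into `X`. -/
def FLocal {B C : XMod} (f : XModHom B C) (X : XMod) : Prop :=
  Function.Bijective fun φ : XModHom C X => XModHom.comp φ f

/-- The subgroup `[N₂, N₁]` of `N₁` generated by the elements `ᵇt·t⁻¹`. -/
def actCommutator (N : XMod) : Subgroup N.M :=
  Subgroup.closure {x | ∃ (b : N.G) (t : N.M), x = N.act b t * t⁻¹}

section NormalClosure

variable {A W : XMod} (φ : XModHom A W)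

/-- The level-2 part of the normal closure of the image of `φ`:
the normal closure of `φ₂(A₂)` in `W₂`. -/
def ncl2 : Subgroup W.G :=
  Subgroup.normalClosure (Set.range φ.f2)

/-- The level-1 part of the normal closure of the image of `φ`:
the subgroup `φ₁(A₁)^{W₂}·[φ₂(A₂)^{W₂}, W₁]` of `W₁`. -/
def ncl1 : Subgroup W.M :=
  Subgroup.closure
    ({x | ∃ (b : W.G) (m : A.M), x = W.act b (φ.f1 m)} ∪
      {x | ∃ s ∈ ncl2 φ, ∃ w : W.M, x = W.act s w * w⁻¹})

end NormalClosure

/-! The comparison map `T ×_Q Q' → LT ×_{LQ} Q'` is componentwise surjective, and its kernel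
lies in the image of the kernel of `ℓ^N`; hence every morphism from `T ×_Q Q'` to an `L`-local
crossed module factors through it, and `L` inverts it. Since `LN` is `L`-local, the hypothesis
makes the pullback of `1 → LN → LT → LQ → 1` along `ℓ^Q ∘ g` an `L`-flat sequence, and applying
`L` to the comparison gives an isomorphism of short exact sequences between the two localized
pullbacks. -/

section ExactSquares

variable {N T Q LN LT LQ : Type*} [Group N] [Group T] [Group Q] [Group LN] [Group LT] [Group LQ]
  {κ : N →* T} {α : T →* Q} {ℓN : N →* LN} {ℓT : T →* LT} {ℓQ : Q →* LQ}
  {Lκ : LN →* LT} {Lα : LT →* LQ}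

theorem MonoidHom.exists_apply_eq_and_apply_eq_of_exact (hκ : ℓT.comp κ = Lκ.comp ℓN)
    (hα : ℓQ.comp α = Lα.comp ℓT) (hακ : α.comp κ = 1) (hα_surj : Function.Surjective α)
    (hℓN : Function.Surjective ℓN) (hℓT : Function.Surjective ℓT) (hexact : Lα.ker ≤ Lκ.range)
    {y : LT} {q : Q} (hy : Lα y = ℓQ q) : ∃ t, α t = q ∧ ℓT t = y := by
  have hκ' : ∀ n, ℓT (κ n) = Lκ (ℓN n) := MonoidHom.ext_iff.mp hκ
  have hα' : ∀ t, ℓQ (α t) = Lα (ℓT t) := MonoidHom.ext_iff.mp hα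
  have hακ' : ∀ n, α (κ n) = 1 := MonoidHom.ext_iff.mp hακ
  obtain ⟨t₀, rfl⟩ := hℓT y
  obtain ⟨s, hs⟩ := hα_surj (q * (α t₀)⁻¹)
  have hs_ker : Lα (ℓT s) = 1 := by rw [← hα', hs, map_mul, map_inv, hα', hy, mul_inv_cancel]
  obtain ⟨z, hz⟩ := hexact hs_ker
  obtain ⟨n, rfl⟩ := hℓN z
  refine ⟨(κ n)⁻¹ * s * t₀, ?_, ?_⟩
  · rw [map_mul, map_mul, map_inv, hακ', hs, inv_one, one_mul, inv_mul_cancel_right]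
  · rw [map_mul, map_mul, map_inv, hκ', hz, inv_mul_cancel, one_mul]

theorem MonoidHom.exists_eq_and_apply_eq_one_of_exact (hκ : ℓT.comp κ = Lκ.comp ℓN)
    (hexact : α.ker ≤ κ.range) (hLκ : Function.Injective Lκ) {t : T} (hαt : α t = 1)
    (hℓt : ℓT t = 1) : ∃ n, κ n = t ∧ ℓN n = 1 := by
  obtain ⟨n, rfl⟩ := hexact hαt
  refine ⟨n, rfl, hLκ ?_⟩
  rw [map_one, ← MonoidHom.comp_apply, ← hκ, MonoidHom.comp_apply, hℓt]

end ExactSquares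

namespace XModHom

variable {A B C D : XMod}

theorem congr_f1 {f f' : XModHom A B} (h : f = f') (x : A.M) : f.f1 x = f'.f1 x := by rw [h]

theorem congr_f2 {f f' : XModHom A B} (h : f = f') (x : A.G) : f.f2 x = f'.f2 x := by rw [h]

theorem comp_assoc (h : XModHom C D) (g : XModHom B C) (f : XModHom A B) :
    comp (comp h g) f = comp h (comp g f) := rfl

theorem id_comp (f : XModHom A B) : comp (id B) f = f := rfl

theorem comp_id (f : XModHom A B) : comp f (id A) = f := rfl

theorem triv_comp (f : XModHom A B) : comp (triv B C) f = triv A C := rfl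

theorem comp_triv (f : XModHom B C) : comp f (triv A B) = triv A C :=
  ext (MonoidHom.ext fun _ => map_one f.f1) (MonoidHom.ext fun _ => map_one f.f2)

theorem isIso_id (A : XMod) : IsIso (id A) := ⟨id A, rfl, rfl⟩

theorem IsIso.surjective_f1 {f : XModHom A B} (h : IsIso f) : Function.Surjective f.f1 :=
  let ⟨g, _, hfg⟩ := h
  fun y => ⟨g.f1 y, congr_f1 hfg y⟩

theorem IsIso.surjective_f2 {f : XModHom A B} (h : IsIso f) : Function.Surjective f.f2 :=
  let ⟨g, _, hfg⟩ := h
  fun y => ⟨g.f2 y, congr_f2 hfg y⟩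

theorem cancel_right_of_surjective {e : XModHom A B} (h1 : Function.Surjective e.f1)
    (h2 : Function.Surjective e.f2) {u v : XModHom B C} (h : comp u e = comp v e) : u = v := by
  refine ext (MonoidHom.ext fun x => ?_) (MonoidHom.ext fun x => ?_)
  · obtain ⟨a, rfl⟩ := h1 x
    exact congr_f1 h a
  · obtain ⟨a, rfl⟩ := h2 x
    exact congr_f2 h a

theorem IsIso.cancel_left {q : XModHom B C} (hq : IsIso q) {u v : XModHom A B}
    (h : comp q u = comp q v) : u = v := by
  obtain ⟨p, hpq, -⟩ := hq
  calc u = comp (comp p q) u := by rw [hpq, id_comp]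
    _ = comp (comp p q) v := congrArg (comp p) h
    _ = v := by rw [hpq, id_comp]

theorem inv_comp_eq_comp_inv {A' B' : XMod} {e : XModHom B B'} {einv : XModHom B' B}
    {m : XModHom A A'} {minv : XModHom A' A} {f : XModHom A B} {f' : XModHom A' B'}
    (he : comp einv e = id B) (hm : comp m minv = id A') (h : comp e f = comp f' m) :
    comp einv f' = comp f minv :=
  calc comp einv f' = comp einv (comp (comp f' m) minv) := by rw [comp_assoc, hm, comp_id]
    _ = comp (comp einv e) (comp f minv) := by rw [← h]; rfl
    _ = comp f minv := by rw [he, id_comp]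

theorem exists_comp_eq_of_surjective_of_ker_le {e : XModHom A B} {φ : XModHom A C}
    (h1 : Function.Surjective e.f1) (h2 : Function.Surjective e.f2)
    (hk1 : e.f1.ker ≤ φ.f1.ker) (hk2 : e.f2.ker ≤ φ.f2.ker) : ∃ ψ : XModHom B C, comp ψ e = φ := by
  let ψ1 := e.f1.liftOfSurjective h1 ⟨φ.f1, hk1⟩
  let ψ2 := e.f2.liftOfSurjective h2 ⟨φ.f2, hk2⟩
  have hψ1 : ∀ a, ψ1 (e.f1 a) = φ.f1 a := e.f1.liftOfRightInverse_comp_apply _ _ ⟨φ.f1, hk1⟩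
  have hψ2 : ∀ a, ψ2 (e.f2 a) = φ.f2 a := e.f2.liftOfRightInverse_comp_apply _ _ ⟨φ.f2, hk2⟩
  refine ⟨⟨ψ1, ψ2, fun x => ?_, fun b x => ?_⟩, ext (MonoidHom.ext hψ1) (MonoidHom.ext hψ2)⟩
  · obtain ⟨a, rfl⟩ := h1 x
    rw [hψ1, e.comm_d, hψ2, φ.comm_d]
  · obtain ⟨a, rfl⟩ := h1 x
    obtain ⟨c, rfl⟩ := h2 b
    rw [← e.equiv, hψ1, hψ2, hψ1, φ.equiv]

end XModHom

open XModHom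

section Kernels

variable {N T Q : XMod} {κ : XModHom N T} {α : XModHom T Q}

def kerLift (α : XModHom T Q) {X : XMod} (u : XModHom X T) (hu : comp α u = triv X Q) :
    XModHom X (kerXMod α) where
  f1 := u.f1.codRestrict α.f1.ker (congr_f1 hu)
  f2 := u.f2.codRestrict α.f2.ker (congr_f2 hu)
  comm_d n := Subtype.ext (u.comm_d n)
  equiv b n := Subtype.ext (u.equiv b n)

theorem kerIncl_isKernelOf (α : XModHom T Q) : IsKernelOf (kerIncl α) α :=
  ⟨ext (MonoidHom.ext fun x => x.2) (MonoidHom.ext fun x => x.2), fun _ u hu =>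
    ⟨kerLift α u hu, rfl, fun _ hv =>
      ext (MonoidHom.ext fun x => Subtype.ext (congr_f1 hv x))
        (MonoidHom.ext fun x => Subtype.ext (congr_f2 hv x))⟩⟩

theorem XModHom.IsKernelOf.exists_kerXMod_inverse (h : IsKernelOf κ α) :
    ∃ w : XModHom (kerXMod α) N,
      comp κ w = kerIncl α ∧ comp w (kerLift α κ h.1) = XModHom.id N := by
  obtain ⟨w, hw, -⟩ := h.2 _ (kerIncl α) (kerIncl_isKernelOf α).1
  exact ⟨w, hw, (h.2 N κ h.1).unique (by rw [← comp_assoc, hw]; rfl) (comp_id κ)⟩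

theorem XModHom.IsKernelOf.ker_le_range_f1 (h : IsKernelOf κ α) : α.f1.ker ≤ κ.f1.range := by
  obtain ⟨w, hw, -⟩ := h.exists_kerXMod_inverse
  exact fun t ht => ⟨w.f1 ⟨t, ht⟩, congr_f1 hw ⟨t, ht⟩⟩

theorem XModHom.IsKernelOf.ker_le_range_f2 (h : IsKernelOf κ α) : α.f2.ker ≤ κ.f2.range := by
  obtain ⟨w, hw, -⟩ := h.exists_kerXMod_inverse
  exact fun t ht => ⟨w.f2 ⟨t, ht⟩, congr_f2 hw ⟨t, ht⟩⟩

theorem XModHom.IsKernelOf.injective_f1 (h : IsKernelOf κ α) : Function.Injective κ.f1 := by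
  obtain ⟨w, -, hwv⟩ := h.exists_kerXMod_inverse
  have hv : Function.Injective (kerLift α κ h.1).f1 :=
    Function.LeftInverse.injective (g := w.f1) (congr_f1 hwv)
  exact fun a b hab => hv (Subtype.ext hab)

theorem XModHom.IsKernelOf.injective_f2 (h : IsKernelOf κ α) : Function.Injective κ.f2 := by
  obtain ⟨w, -, hwv⟩ := h.exists_kerXMod_inverse
  have hv : Function.Injective (kerLift α κ h.1).f2 :=
    Function.LeftInverse.injective (g := w.f2) (congr_f2 hwv)
  exact fun a b hab => hv (Subtype.ext hab)

variable {N' T' Q' : XMod} {κ' : XModHom N' T'} {α' : XModHom T' Q'}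
  {n : XModHom N N'} {t : XModHom T T'} {q : XModHom Q Q'}

theorem ShortExact.of_iso (hn : IsIso n) (ht : IsIso t) (hq : IsIso q)
    (hk : comp t κ = comp κ' n) (ha : comp q α = comp α' t) (h : ShortExact κ α) :
    ShortExact κ' α' := by
  obtain ⟨ninv, hn1, hn2⟩ := hn
  obtain ⟨tinv, ht1, ht2⟩ := ht
  obtain rfl : κ' = comp t (comp κ ninv) := by rw [← comp_assoc, hk, comp_assoc, hn2, comp_id]
  obtain rfl : α' = comp q (comp α tinv) := by rw [← comp_assoc, ha, comp_assoc, ht2, comp_id]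
  have htinv : comp tinv (comp t κ) = κ := by rw [← comp_assoc, ht1, id_comp]
  refine ⟨⟨?_, fun X u hu => ?_⟩, hq.surjective_f1.comp (h.2.1.comp (IsIso.surjective_f1
    ⟨t, ht2, ht1⟩)), hq.surjective_f2.comp (h.2.2.comp (IsIso.surjective_f2 ⟨t, ht2, ht1⟩))⟩
  · change comp q (comp α (comp (comp tinv (comp t κ)) ninv)) = _
    rw [htinv, ← comp_assoc α, h.1.1, triv_comp, comp_triv]
  · have hu' : comp α (comp tinv u) = triv X Q := hq.cancel_left (hu.trans (comp_triv q).symm)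
    obtain ⟨v, hv, hv_uniq⟩ := h.1.2 X (comp tinv u) hu'
    refine ⟨comp n v, ?_, fun v' hv' => ?_⟩
    · change comp t (comp κ (comp (comp ninv n) v)) = u
      rw [hn1, id_comp, hv, ← comp_assoc, ht2, id_comp]
    · have hv'' : comp κ (comp ninv v') = comp tinv u := by
        rw [← hv']
        change _ = comp (comp tinv (comp t κ)) (comp ninv v')
        rw [htinv]
      rw [← hv_uniq _ hv'', ← comp_assoc, hn2, id_comp]

theorem shortExact_iff_of_iso (hn : IsIso n) (ht : IsIso t) (hq : IsIso q)
    (hk : comp t κ = comp κ' n) (ha : comp q α = comp α' t) :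
    ShortExact κ α ↔ ShortExact κ' α' := by
  refine ⟨ShortExact.of_iso hn ht hq hk ha, fun h => ?_⟩
  obtain ⟨ninv, hn1, hn2⟩ := hn
  obtain ⟨tinv, ht1, ht2⟩ := ht
  obtain ⟨qinv, hq1, hq2⟩ := hq
  exact h.of_iso ⟨n, hn2, hn1⟩ ⟨t, ht2, ht1⟩ ⟨q, hq2, hq1⟩ (inv_comp_eq_comp_inv ht1 hn2 hk)
    (inv_comp_eq_comp_inv hq1 ht2 ha)

end Kernels

namespace LocalizationFunctor

variable (L : LocalizationFunctor)

theorem IsLocal.exists_comp_ell_eq {X : XMod} (hX : L.IsLocal X) {A : XMod} (φ : XModHom A X) :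
    ∃ ψ, comp ψ (L.ell A) = φ := by
  obtain ⟨xinv, hx, -⟩ := hX
  refine ⟨comp xinv (L.map φ), ?_⟩
  rw [comp_assoc, ← L.natural, ← comp_assoc, hx, id_comp]

theorem isIso_map_of_surjective_of_forall_exists_comp_eq (hL : L.RegEpiLoc) {A B : XMod}
    (f : XModHom A B) (hf1 : Function.Surjective f.f1) (hf2 : Function.Surjective f.f2)
    (hfac : ∀ X : XMod, L.IsLocal X → ∀ φ : XModHom A X, ∃ ψ, comp ψ f = φ) :
    IsIso (L.map f) := by
  obtain ⟨d, hd⟩ := hfac (L.obj A) (L.iso_ell_obj A) (L.ell A)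
  obtain ⟨σ, hσ, -⟩ := L.iso_map_ell A
  have hleft : comp (comp σ (L.map d)) (L.map f) = XModHom.id (L.obj A) := by
    rw [comp_assoc, ← L.map_comp, hd, hσ]
  refine ⟨comp σ (L.map d), hleft, ?_⟩
  -- `L.map f ∘ σ ∘ L.map d` fixes `ℓ^B`, which is an epimorphism
  refine cancel_right_of_surjective (hL B).1 (hL B).2 (cancel_right_of_surjective hf1 hf2 ?_)
  change comp (comp (L.map f) (comp σ (L.map d))) (comp (L.ell B) f) = comp (L.ell B) f
  rw [L.natural, ← comp_assoc, comp_assoc (L.map f), hleft, comp_id]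

variable {L}

theorem LFlat.map {N T Q : XMod} {κ : XModHom N T} {α : XModHom T Q} (h : L.LFlat κ α) :
    L.LFlat (L.map κ) (L.map α) :=
  (shortExact_iff_of_iso (L.iso_ell_obj N) (L.iso_ell_obj T) (L.iso_ell_obj Q)
    (L.natural (L.map κ)) (L.natural (L.map α))).mp h

end LocalizationFunctor

section Comparison

variable {N T Q Q' X : XMod}

theorem comp_pbFst_eq_comp_pbSnd (α : XModHom T Q) (g : XModHom Q' Q) :
    comp α (pbFst α g) = comp g (pbSnd α g) :=
  ext (MonoidHom.ext fun p => p.2) (MonoidHom.ext fun p => p.2)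

def pbLift (α : XModHom T Q) (g : XModHom Q' Q) (u : XModHom X T) (v : XModHom X Q')
    (h : comp α u = comp g v) : XModHom X (pbXMod α g) where
  f1 := (u.f1.prod v.f1).codRestrict (pbM α g) (congr_f1 h)
  f2 := (u.f2.prod v.f2).codRestrict (pbG α g) (congr_f2 h)
  comm_d x := Subtype.ext (Prod.ext (u.comm_d x) (v.comm_d x))
  equiv b x := Subtype.ext (Prod.ext (u.equiv b x) (v.equiv b x))

def pbCompare (L : LocalizationFunctor) (α : XModHom T Q) (g : XModHom Q' Q) :
    XModHom (pbXMod α g) (pbXMod (L.map α) (comp (L.ell Q) g)) :=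
  pbLift _ _ (comp (L.ell T) (pbFst α g)) (pbSnd α g)
    (by rw [← comp_assoc, ← L.natural, comp_assoc, comp_pbFst_eq_comp_pbSnd, ← comp_assoc])

variable (L : LocalizationFunctor) {κ : XModHom N T} {α : XModHom T Q} (g : XModHom Q' Q)

theorem pbCompare_comp_pbIn (hκα : comp α κ = triv N Q)
    (hLκα : comp (L.map α) (L.map κ) = triv _ _) :
    comp (pbCompare L α g) (pbIn κ α g hκα) =
      comp (pbIn (L.map κ) (L.map α) (comp (L.ell Q) g) hLκα) (L.ell N) :=
  ext (MonoidHom.ext fun n => Subtype.ext (Prod.ext (congr_f1 (L.natural κ) n) rfl))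
    (MonoidHom.ext fun n => Subtype.ext (Prod.ext (congr_f2 (L.natural κ) n) rfl))

theorem pbSnd_comp_pbCompare :
    comp (pbSnd (L.map α) (comp (L.ell Q) g)) (pbCompare L α g) = pbSnd α g := rfl

theorem pbCompare_surjective_f1 (hL : L.RegEpiLoc) (hse : ShortExact κ α) (hflat : L.LFlat κ α) :
    Function.Surjective (pbCompare L α g).f1 := by
  rintro ⟨⟨y, m⟩, hy⟩
  obtain ⟨t, ht, rfl⟩ := MonoidHom.exists_apply_eq_and_apply_eq_of_exact
    (congrArg XModHom.f1 (L.natural κ)) (congrArg XModHom.f1 (L.natural α))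
    (congrArg XModHom.f1 hse.1.1) hse.2.1 (hL N).1 (hL T).1 hflat.1.ker_le_range_f1 hy
  exact ⟨⟨(t, m), ht⟩, rfl⟩

theorem pbCompare_surjective_f2 (hL : L.RegEpiLoc) (hse : ShortExact κ α) (hflat : L.LFlat κ α) :
    Function.Surjective (pbCompare L α g).f2 := by
  rintro ⟨⟨y, m⟩, hy⟩
  obtain ⟨t, ht, rfl⟩ := MonoidHom.exists_apply_eq_and_apply_eq_of_exact
    (congrArg XModHom.f2 (L.natural κ)) (congrArg XModHom.f2 (L.natural α))
    (congrArg XModHom.f2 hse.1.1) hse.2.2 (hL N).2 (hL T).2 hflat.1.ker_le_range_f2 hy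
  exact ⟨⟨(t, m), ht⟩, rfl⟩

variable {L g}

theorem ker_pbCompare_f1_le (hker : IsKernelOf κ α) (hflat : L.LFlat κ α)
    {φ : XModHom (pbXMod α g) X} {ψ : XModHom (L.obj N) X}
    (hψ : comp ψ (L.ell N) = comp φ (pbIn κ α g hker.1)) :
    (pbCompare L α g).f1.ker ≤ φ.f1.ker := by
  rintro ⟨⟨t, m⟩, hmem⟩ he
  obtain ⟨ht, rfl⟩ := Prod.ext_iff.mp (congrArg Subtype.val he)
  obtain ⟨n, rfl, hn⟩ := MonoidHom.exists_eq_and_apply_eq_one_of_exact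
    (congrArg XModHom.f1 (L.natural κ)) hker.ker_le_range_f1 hflat.1.injective_f1
    (hmem.trans (map_one _)) ht
  calc φ.f1 ((pbIn κ α g hker.1).f1 n) = ψ.f1 ((L.ell N).f1 n) := (congr_f1 hψ n).symm
    _ = 1 := by rw [hn, map_one]

theorem ker_pbCompare_f2_le (hker : IsKernelOf κ α) (hflat : L.LFlat κ α)
    {φ : XModHom (pbXMod α g) X} {ψ : XModHom (L.obj N) X}
    (hψ : comp ψ (L.ell N) = comp φ (pbIn κ α g hker.1)) :
    (pbCompare L α g).f2.ker ≤ φ.f2.ker := by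
  rintro ⟨⟨t, m⟩, hmem⟩ he
  obtain ⟨ht, rfl⟩ := Prod.ext_iff.mp (congrArg Subtype.val he)
  obtain ⟨n, rfl, hn⟩ := MonoidHom.exists_eq_and_apply_eq_one_of_exact
    (congrArg XModHom.f2 (L.natural κ)) hker.ker_le_range_f2 hflat.1.injective_f2
    (hmem.trans (map_one _)) ht
  calc φ.f2 ((pbIn κ α g hker.1).f2 n) = ψ.f2 ((L.ell N).f2 n) := (congr_f2 hψ n).symm
    _ = 1 := by rw [hn, map_one]

variable (L g)

theorem isIso_map_pbCompare (hL : L.RegEpiLoc) (hse : ShortExact κ α) (hflat : L.LFlat κ α) :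
    IsIso (L.map (pbCompare L α g)) := by
  have h1 := pbCompare_surjective_f1 L g hL hse hflat
  have h2 := pbCompare_surjective_f2 L g hL hse hflat
  refine L.isIso_map_of_surjective_of_forall_exists_comp_eq hL _ h1 h2 fun X hX φ => ?_
  obtain ⟨ψ, hψ⟩ := hX.exists_comp_ell_eq L (comp φ (pbIn κ α g hse.1.1))
  exact exists_comp_eq_of_surjective_of_ker_le h1 h2 (ker_pbCompare_f1_le hse.1 hflat hψ)
    (ker_pbCompare_f2_le hse.1 hflat hψ)

end Comparison

/-- A regular-epi localization functor `L` is conditionally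
flat if and only if for every `L`-flat short exact sequence whose kernel `N` is
`L`-local, the pullback sequence along any morphism `Q' → Q` is `L`-flat. -/
theorem conditionallyFlat_iff_local_kernel (L : LocalizationFunctor)
    (hL : L.RegEpiLoc) :
    L.ConditionallyFlat ↔
      ∀ (N T Q : XMod) (κ : XModHom N T) (α : XModHom T Q)
        (hse : ShortExact κ α), L.LFlat κ α → L.IsLocal N →
          ∀ (Q' : XMod) (g : XModHom Q' Q),
            L.LFlat (pbIn κ α g hse.1.1) (pbSnd α g) := by
  refine ⟨fun h N T Q κ α hse hflat _ => h N T Q κ α hse hflat,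
    fun H N T Q κ α hse hflat Q' g => ?_⟩
  have hpb := H _ _ _ _ _ hflat hflat.map (L.iso_ell_obj N) Q' (comp (L.ell Q) g)
  refine (shortExact_iff_of_iso (L.iso_map_ell N) (isIso_map_pbCompare L g hL hse hflat)
    (isIso_id _) ?_ ?_).mpr hpb
  · rw [← L.map_comp, ← L.map_comp]
    exact congrArg L.map (pbCompare_comp_pbIn L g _ _)
  · rw [id_comp, ← L.map_comp, pbSnd_comp_pbCompare]
end

section
/- There exists a regular-epi localization functor L on the category XMod of crossed modules of groups that is not admissible for the class of regular epimorphisms. -/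
set_option linter.unusedVariables false

/-!
Let `L` kill the squares of level-1 elements in the kernel of `∂`:
`L X = (X₁ / ⟨t² | ∂t = 1⟩, X₂)`. This is the reflection onto the crossed modules whose `∂`-kernel
has exponent `2`, and its coaugmentations are surjective. Take `T = (C₄ = C₄)` and `Q = (C₄ → 1)`,
so that `LT = T` and `LQ = (C₂ → 1)`. The pullback `P` of `α = L(T → Q)` along `ℓ^Q : Q → LQ` has
level-1 group `{(a, b) ∈ C₄ × C₄ | a ≡ b mod 2}`, whose `∂`-kernel `{(0, 0), (0, 2)}` has exponent
`2`; hence `LP = P`. The element `(0, 2)` of `LP` is nontrivial but is sent to `1` by both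
`L`-projections, because `2` is a square in `Q₁`. This is impossible in a pullback square, whose
legs are jointly injective on level 1 since `(ℤ = ℤ)` corepresents `X ↦ X₁`.
-/

namespace XMod

def kerSq (X : XMod) : Subgroup X.M :=
  Subgroup.closure {x | ∃ t : X.M, X.d t = 1 ∧ x = t * t}

theorem kerSq_le_comap {X Y : XMod} (φ : X.M →* Y.M)
    (hφ : ∀ t, X.d t = 1 → Y.d (φ t) = 1) : X.kerSq ≤ Y.kerSq.comap φ :=
  (Subgroup.closure_le _).mpr fun _ ⟨t, ht, hx⟩ =>
    Subgroup.subset_closure ⟨φ t, hφ t ht, by rw [hx, map_mul]⟩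

theorem kerSq_le_comap_f1 {A B : XMod} (f : XModHom A B) : A.kerSq ≤ B.kerSq.comap f.f1 :=
  kerSq_le_comap f.f1 fun t ht => by rw [f.comm_d, ht, map_one]

theorem act_mem_kerSq (X : XMod) (b : X.G) {x : X.M} (hx : x ∈ X.kerSq) :
    X.act b x ∈ X.kerSq :=
  kerSq_le_comap (X.act b).toMonoidHom (fun t ht => by simp [X.act_d, ht]) hx

instance kerSq_normal (X : XMod) : X.kerSq.Normal :=
  ⟨fun n hn g => by simpa only [X.peiffer] using X.act_mem_kerSq (X.d g) hn⟩

theorem kerSq_le_ker_d (X : XMod) : X.kerSq ≤ X.d.ker :=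
  (Subgroup.closure_le _).mpr fun _ ⟨t, ht, hx⟩ => by simp [hx, ht]

theorem kerSq_map_act (X : XMod) (b : X.G) :
    X.kerSq.map (X.act b).toMonoidHom = X.kerSq :=
  le_antisymm (Subgroup.map_le_iff_le_comap.mpr fun _ hx => X.act_mem_kerSq b hx)
    fun x hx => ⟨X.act b⁻¹ x, X.act_mem_kerSq b⁻¹ hx, X.act_act_inv b x⟩

theorem kerSq_eq_bot_iff (X : XMod) : X.kerSq = ⊥ ↔ ∀ t, X.d t = 1 → t * t = 1 := by
  rw [kerSq, Subgroup.closure_eq_bot_iff]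
  exact ⟨fun h t ht => h ⟨t, ht, rfl⟩, fun h _ ⟨t, ht, hx⟩ => hx ▸ h t ht⟩

def quotKerSq (X : XMod) : XMod where
  M := X.M ⧸ X.kerSq
  G := X.G
  act :=
    { toFun := fun b => QuotientGroup.congr _ _ (X.act b) (X.kerSq_map_act b)
      map_one' := MulEquiv.ext fun x => QuotientGroup.induction_on x fun t => by
        simp
      map_mul' := fun b c => MulEquiv.ext fun x => QuotientGroup.induction_on x fun t =>
        congrArg QuotientGroup.mk (by rw [map_mul]; rfl) }
  d := QuotientGroup.lift _ X.d X.kerSq_le_ker_d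
  act_d b t := QuotientGroup.induction_on t fun s => X.act_d b s
  peiffer t s := QuotientGroup.induction_on t fun t' => QuotientGroup.induction_on s fun s' =>
    congrArg QuotientGroup.mk (X.peiffer t' s')

def toQuotKerSq (X : XMod) : XModHom X X.quotKerSq where
  f1 := QuotientGroup.mk' X.kerSq
  f2 := MonoidHom.id X.G
  comm_d _ := rfl
  equiv _ _ := rfl

theorem toQuotKerSq_regEpi (X : XMod) : XModHom.RegEpi X.toQuotKerSq :=
  ⟨QuotientGroup.mk'_surjective _, Function.surjective_id⟩

theorem quotKerSq_hom_ext {X Y : XMod} {f g : XModHom X.quotKerSq Y}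
    (h : XModHom.comp f X.toQuotKerSq = XModHom.comp g X.toQuotKerSq) : f = g := by
  have h1 := congrArg XModHom.f1 h
  have h2 := congrArg XModHom.f2 h
  exact XModHom.ext (QuotientGroup.monoidHom_ext _ h1) h2

def quotKerSqMap {A B : XMod} (f : XModHom A B) : XModHom A.quotKerSq B.quotKerSq where
  f1 := QuotientGroup.map _ _ f.f1 (kerSq_le_comap_f1 f)
  f2 := f.f2
  comm_d n := QuotientGroup.induction_on n f.comm_d
  equiv b n := QuotientGroup.induction_on n fun t => congrArg QuotientGroup.mk (f.equiv b t)

theorem quotKerSqMap_regEpi {A B : XMod} {f : XModHom A B} (hf : XModHom.RegEpi f) :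
    XModHom.RegEpi (quotKerSqMap f) :=
  ⟨QuotientGroup.map_surjective_of_surjective _ _ _ (QuotientGroup.mk_surjective.comp hf.1)
    (kerSq_le_comap_f1 f), hf.2⟩

theorem kerSq_quotKerSq (X : XMod) : X.quotKerSq.kerSq = ⊥ :=
  X.quotKerSq.kerSq_eq_bot_iff.mpr fun t => QuotientGroup.induction_on t fun s hs =>
    (QuotientGroup.eq_one_iff _).mpr (Subgroup.subset_closure ⟨s, hs, rfl⟩)

def ofQuotKerSq (X : XMod) (h : X.kerSq = ⊥) : XModHom X.quotKerSq X where
  f1 := QuotientGroup.lift _ (MonoidHom.id X.M) (by rw [h]; exact bot_le)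
  f2 := MonoidHom.id X.G
  comm_d n := QuotientGroup.induction_on n fun _ => rfl
  equiv _ n := QuotientGroup.induction_on n fun _ => rfl

theorem toQuotKerSq_isIso {X : XMod} (h : X.kerSq = ⊥) : XModHom.IsIso X.toQuotKerSq :=
  ⟨X.ofQuotKerSq h, rfl, quotKerSq_hom_ext rfl⟩

end XMod

open XMod in
def kerSqLocalization : LocalizationFunctor where
  obj := quotKerSq
  map := quotKerSqMap
  map_id _ := quotKerSq_hom_ext rfl
  map_comp _ _ := quotKerSq_hom_ext rfl
  ell := toQuotKerSq
  natural _ := rfl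
  iso_ell_obj X := toQuotKerSq_isIso X.kerSq_quotKerSq
  iso_map_ell X := by
    rw [show quotKerSqMap X.toQuotKerSq = X.quotKerSq.toQuotKerSq from quotKerSq_hom_ext rfl]
    exact toQuotKerSq_isIso X.kerSq_quotKerSq

theorem kerSqLocalization_regEpiLoc : kerSqLocalization.RegEpiLoc :=
  XMod.toQuotKerSq_regEpi

abbrev idXMod (A : Type) [CommGroup A] : XMod where
  M := A
  G := A
  act := 1
  d := MonoidHom.id A
  act_d b t := (mul_inv_cancel_comm b t).symm
  peiffer t s := (mul_inv_cancel_comm t s).symm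

abbrev levelOneXMod (A : Type) [CommGroup A] : XMod where
  M := A
  G := PUnit
  act := 1
  d := 1
  act_d _ _ := rfl
  peiffer t s := (mul_inv_cancel_comm t s).symm

def idToLevelOne (A : Type) [CommGroup A] : XModHom (idXMod A) (levelOneXMod A) where
  f1 := MonoidHom.id A
  f2 := 1
  comm_d _ := rfl
  equiv _ _ := rfl

theorem idToLevelOne_regEpi (A : Type) [CommGroup A] : XModHom.RegEpi (idToLevelOne A) :=
  ⟨Function.surjective_id, fun _ => ⟨1, rfl⟩⟩

def XMod.zpowersHom (X : XMod) (x : X.M) : XModHom (idXMod (Multiplicative ℤ)) X where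
  f1 := _root_.zpowersHom X.M x
  f2 := _root_.zpowersHom X.G (X.d x)
  comm_d (n : Multiplicative ℤ) := map_zpow X.d x n.toAdd
  equiv (b n : Multiplicative ℤ) := by
    show x ^ n.toAdd = X.act (X.d x ^ b.toAdd) (x ^ n.toAdd)
    rw [← map_zpow, X.peiffer, (Commute.zpow_zpow_self x _ _).mul_inv_cancel]

theorem XModHom.comp_zpowersHom {X Y : XMod} (f : XModHom X Y) (x : X.M) :
    XModHom.comp f (X.zpowersHom x) = Y.zpowersHom (f.f1 x) :=
  XModHom.ext (MonoidHom.ext fun (n : Multiplicative ℤ) => map_zpow f.f1 x n.toAdd)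
    (MonoidHom.ext fun (n : Multiplicative ℤ) => by
      show f.f2 (X.d x ^ n.toAdd) = Y.d (f.f1 x) ^ n.toAdd
      rw [map_zpow, f.comm_d])

theorem IsPullbackSquare.hom_ext {P X Y Z W : XMod} {p1 : XModHom P X} {p2 : XModHom P Y}
    {f : XModHom X Z} {h : XModHom Y Z} (hsq : IsPullbackSquare p1 p2 f h) {w w' : XModHom W P}
    (h1 : XModHom.comp p1 w = XModHom.comp p1 w') (h2 : XModHom.comp p2 w = XModHom.comp p2 w') :
    w = w' := by
  obtain ⟨_, -, huniq⟩ := hsq.2 W (XModHom.comp p1 w) (XModHom.comp p2 w)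
    (congrArg (XModHom.comp · w) hsq.1)
  exact (huniq w ⟨rfl, rfl⟩).trans (huniq w' ⟨h1.symm, h2.symm⟩).symm

theorem IsPullbackSquare.injective_f1 {P X Y Z : XMod} {p1 : XModHom P X} {p2 : XModHom P Y}
    {f : XModHom X Z} {h : XModHom Y Z} (hsq : IsPullbackSquare p1 p2 f h) :
    Function.Injective fun x : P.M => (p1.f1 x, p2.f1 x) := by
  intro x y hxy
  obtain ⟨h1, h2⟩ := Prod.mk.inj hxy
  have hxy : P.zpowersHom x = P.zpowersHom y :=
    hsq.hom_ext (by rw [XModHom.comp_zpowersHom, XModHom.comp_zpowersHom, h1])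
      (by rw [XModHom.comp_zpowersHom, XModHom.comp_zpowersHom, h2])
  have hgen : x ^ (1 : ℤ) = y ^ (1 : ℤ) :=
    DFunLike.congr_fun (congrArg XModHom.f1 hxy) (Multiplicative.ofAdd (1 : ℤ))
  rwa [zpow_one, zpow_one] at hgen

abbrev C4 : Type := Multiplicative (ZMod 4)

theorem mul_self_eq_one_of_mem_kerSq_levelOneXMod {n : C4}
    (hn : n ∈ (levelOneXMod C4).kerSq) : n * n = 1 := by
  have hle : (levelOneXMod C4).kerSq ≤ (powMonoidHom 2 : C4 →* C4).ker :=
    (Subgroup.closure_le _).mpr fun _ ⟨t, _, hx⟩ =>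
      hx ▸ (by decide : ∀ t : C4, (t * t) ^ 2 = 1) t
  have hsq := hle hn
  rwa [MonoidHom.mem_ker, powMonoidHom_apply, pow_two] at hsq

def c4Alpha : XModHom (idXMod C4).quotKerSq (levelOneXMod C4).quotKerSq :=
  XMod.quotKerSqMap (idToLevelOne C4)

def c4Pullback : XMod := pbXMod c4Alpha (levelOneXMod C4).toQuotKerSq

theorem ofAdd_two_mem_kerSq : Multiplicative.ofAdd (2 : ZMod 4) ∈ (levelOneXMod C4).kerSq :=
  Subgroup.subset_closure ⟨Multiplicative.ofAdd (1 : ZMod 4), rfl, by decide⟩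

def c4PullbackElt : c4Pullback.M :=
  ⟨(1, Multiplicative.ofAdd (2 : ZMod 4)),
    ((QuotientGroup.eq_one_iff _).mpr ofAdd_two_mem_kerSq).symm⟩

theorem kerSq_c4Pullback : c4Pullback.kerSq = ⊥ := by
  rw [XMod.kerSq_eq_bot_iff]
  rintro ⟨⟨m, n⟩, hmn⟩ hd
  obtain ⟨a, rfl⟩ := QuotientGroup.mk_surjective m
  obtain rfl : a = 1 := congrArg (fun p => p.1.1) hd
  have hn : n ∈ (levelOneXMod C4).kerSq := (QuotientGroup.eq_one_iff n).mp hmn.symm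
  exact Subtype.ext (Prod.ext (mul_one _) (mul_self_eq_one_of_mem_kerSq_levelOneXMod hn))

theorem c4PullbackElt_ne_one : c4Pullback.toQuotKerSq.f1 c4PullbackElt ≠ 1 := by
  show (QuotientGroup.mk c4PullbackElt : c4Pullback.M ⧸ c4Pullback.kerSq) ≠ 1
  rw [Ne, QuotientGroup.eq_one_iff, kerSq_c4Pullback, Subgroup.mem_bot]
  intro h
  have h2 : Multiplicative.ofAdd (2 : ZMod 4) = 1 := congrArg (fun p => p.1.2) h
  exact absurd h2 (by decide)

theorem kerSqLocalization_not_admissible : ¬ kerSqLocalization.Admissible := by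
  intro hadm
  have hsq := hadm _ _ c4Alpha (XMod.quotKerSqMap_regEpi (idToLevelOne_regEpi C4))
  refine c4PullbackElt_ne_one (hsq.injective_f1 (a₂ := 1) (Prod.ext ?_ ?_))
  · simp only [map_one]
    rfl
  · simp only [map_one]
    exact (QuotientGroup.eq_one_iff _).mpr ofAdd_two_mem_kerSq

/-- There exists a regular-epi localization functor on `XMod`
that is not admissible for the class of regular epimorphisms. -/
theorem exists_regepi_localization_not_admissible :
    ∃ L : LocalizationFunctor, L.RegEpiLoc ∧ ¬ L.Admissible :=
  ⟨kerSqLocalization, kerSqLocalization_regEpiLoc, kerSqLocalization_not_admissible⟩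
end
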